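/- arXiv:2508.18011 — 5 statements merged into one kernel-verified Lean document; each statement's English description precedes it below -/
import Mathlib

section
/- Scaling law: let n ≥ 2, λ ≥ 0 (with λ finite), and t > 0 a real number. Then for every set E ⊆ ℝ^n, μ_λ(t • E) = t^n · μ_{λ/t}(E), where t • E = { t·x : x ∈ E } and μ_λ, μ_{λ/t} are the mixed-gauge outer measures with parameters λ and λ/t respectively. -/
open MeasureTheory
open scoped ENNReal Pointwise

/-- The mixed-gauge (method I) outer measure `μ_λ` on `ℝ^n`, built from the gauge
`h_λ(r) = r^n + λ * r^(n-1)` applied to the extended diameter of covering sets. -/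
noncomputable def mixedGauge (n : ℕ) (lam : ℝ≥0∞) :
    OuterMeasure (EuclideanSpace ℝ (Fin n)) :=
  OuterMeasure.boundedBy fun s => (EMetric.diam s) ^ n + lam * (EMetric.diam s) ^ (n - 1)

/-!
Dilation by `t > 0` is a bijection multiplying every diameter by `t`, so covers of `t • E`
are exactly the dilates of covers of `E`, and the gauge transforms as
`h_λ(t d) = t^n d^n + λ t^(n-1) d^(n-1) = t^n h_{λ/t}(d)`.
-/

theorem OuterMeasure.boundedBy_smul_set₀ {G₀ α : Type*} [GroupWithZero G₀] [MulAction G₀ α]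
    (m : Set α → ℝ≥0∞) {c : G₀} (hc : c ≠ 0) (A : Set α) :
    OuterMeasure.boundedBy m (c • A) = OuterMeasure.boundedBy (fun s => m (c • s)) A := by
  have hcomap := OuterMeasure.comap_boundedBy (m := m) (c • ·) (Or.inr (MulAction.surjective₀ hc))
  simp only [Set.image_smul] at hcomap
  rw [← hcomap, OuterMeasure.comap_apply, Set.image_smul]

theorem ediam_smul_of_pos {E : Type*} [SeminormedAddCommGroup E] [NormedSpace ℝ E]
    {t : ℝ} (ht : 0 < t) (s : Set E) :
    Metric.ediam (t • s) = ENNReal.ofReal t * Metric.ediam s := by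
  rw [ediam_smul₀, ENNReal.smul_def, smul_eq_mul, ← enorm_eq_nnnorm, Real.enorm_eq_ofReal ht.le]

theorem ENNReal.mul_pow_add_mul_mul_pow_pred {T : ℝ≥0∞} (hT0 : T ≠ 0) (hT : T ≠ ∞)
    {n : ℕ} (hn : n ≠ 0) (lam d : ℝ≥0∞) :
    (T * d) ^ n + lam * (T * d) ^ (n - 1) = T ^ n * (d ^ n + lam / T * d ^ (n - 1)) := by
  have hpow : T ^ n * T⁻¹ = T ^ (n - 1) := by
    rw [← Nat.sub_one_add_one hn, pow_succ, mul_assoc, ENNReal.mul_inv_cancel hT0 hT, mul_one,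
      Nat.add_sub_cancel]
  rw [mul_pow, mul_pow, mul_add, ENNReal.div_eq_inv_mul, ← hpow]
  ring

theorem mixedGauge_smul_set_general (n : ℕ) (hn : 2 ≤ n) (lam : ℝ≥0∞)
    (t : ℝ) (ht : 0 < t) (E : Set (EuclideanSpace ℝ (Fin n))) :
    mixedGauge n lam (t • E)
      = (ENNReal.ofReal t) ^ n * mixedGauge n (lam / ENNReal.ofReal t) E := by
  have hT0 : ENNReal.ofReal t ≠ 0 := by simpa using ht
  have hgauge : (fun s : Set (EuclideanSpace ℝ (Fin n)) =>
        Metric.ediam (t • s) ^ n + lam * Metric.ediam (t • s) ^ (n - 1))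
      = ENNReal.ofReal t ^ n • fun s =>
        Metric.ediam s ^ n + lam / ENNReal.ofReal t * Metric.ediam s ^ (n - 1) := by
    funext s
    rw [ediam_smul_of_pos ht, ENNReal.mul_pow_add_mul_mul_pow_pred hT0 ENNReal.ofReal_ne_top
      (by omega)]
    rfl
  -- `EMetric.diam` is a deprecated alias of `Metric.ediam`, not a reducible abbreviation
  delta mixedGauge EMetric.diam
  rw [OuterMeasure.boundedBy_smul_set₀ _ ht.ne', hgauge,
    ← OuterMeasure.smul_boundedBy (ENNReal.pow_ne_top ENNReal.ofReal_ne_top)]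
  rfl

/-- **Scaling law.** For `n ≥ 2`, finite `λ ≥ 0` and real `t > 0`,
`μ_λ(t • E) = t^n • μ_{λ/t}(E)` for every `E ⊆ ℝ^n`. -/
theorem mixedGauge_smul_set (n : ℕ) (hn : 2 ≤ n) (lam : ℝ≥0∞) (hlam : lam ≠ ∞)
    (t : ℝ) (ht : 0 < t) (E : Set (EuclideanSpace ℝ (Fin n))) :
    mixedGauge n lam (t • E)
      = (ENNReal.ofReal t) ^ n * mixedGauge n (lam / ENNReal.ofReal t) E :=
  mixedGauge_smul_set_general n hn lam t ht E
end

section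
/- Hausdorff content versus Hausdorff measure on Lipschitz graphs: let n ≥ 2 and L ≥ 0, and let f : ℝ^{n-1} → ℝ be an L-Lipschitz function. There exists a constant c(n, L) > 0, depending only on n and L, such that for every subset K of the graph Γ_f = { (y, f(y)) : y ∈ ℝ^{n-1} } ⊆ ℝ^n, one has 𝓗^{n-1}_∞(K) ≥ c(n, L) · 𝓗^{n-1}(K), where 𝓗^{n-1}_∞ is the (n−1)-dimensional Hausdorff content and 𝓗^{n-1} is the (n−1)-dimensional Hausdorff measure on ℝ^n. -/
open MeasureTheory
open scoped ENNReal NNReal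

/-- The `(n-1)`-dimensional Hausdorff content on `ℝ^n`: the method-I outer measure with
gauge `r ↦ r^(n-1)` applied to the extended diameter of covering sets. -/
noncomputable def hausdorffContent (n : ℕ) :
    OuterMeasure (EuclideanSpace ℝ (Fin n)) :=
  OuterMeasure.boundedBy fun s => (EMetric.diam s) ^ (n - 1)

/-!
Let `g y = (y, f y)` parametrize the graph and `π` be the projection onto the first factor:
`π` is `1`-Lipschitz and `g` is `√2 · max 1 L`-Lipschitz with `g ∘ π = id` on the graph. Hence
for every set `s`, `𝓗^{n-1}(s ∩ K) ≤ Lip(g)^{n-1} 𝓗^{n-1}(π (s ∩ K))`, and in `ℝ^{n-1}` the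
Hausdorff measure of a set is at most `(√(n-1) · diam)^{n-1}` (compare with Lebesgue measure for
the sup metric). So `c · 𝓗^{n-1}` restricted to `K` is bounded by `diam^{n-1}` on every set, and
the content, being the largest outer measure with this property, dominates it.
-/

namespace EuclideanSpace

variable {ι : Type*} [Fintype ι]

lemma lipschitzWith_toLp :
    LipschitzWith (NNReal.sqrt (Fintype.card ι))
      (WithLp.toLp 2 : (ι → ℝ) → EuclideanSpace ℝ ι) := by
  convert PiLp.lipschitzWith_toLp 2 (fun _ : ι => ℝ) using 1
  rw [NNReal.sqrt_eq_rpow]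
  norm_num

lemma hausdorffMeasure_le_mul_ediam_pow (T : Set (EuclideanSpace ℝ ι)) :
    μH[Fintype.card ι] T ≤
      (NNReal.sqrt (Fintype.card ι) : ℝ≥0∞) ^ Fintype.card ι * Metric.ediam T ^ Fintype.card ι := by
  set d := Fintype.card ι
  have hT : T = WithLp.toLp 2 '' (WithLp.ofLp '' T) := by simp [Set.image_image]
  calc μH[d] T = μH[d] (WithLp.toLp 2 '' (WithLp.ofLp '' T)) := by rw [← hT]
    _ ≤ (NNReal.sqrt d : ℝ≥0∞) ^ (d : ℝ) * μH[d] (WithLp.ofLp '' T) :=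
        lipschitzWith_toLp.hausdorffMeasure_image_le (by positivity) _
    _ = (NNReal.sqrt d : ℝ≥0∞) ^ d * volume (WithLp.ofLp '' T) := by
        rw [ENNReal.rpow_natCast, hausdorffMeasure_pi_real]
    _ ≤ (NNReal.sqrt d : ℝ≥0∞) ^ d * Metric.ediam (WithLp.ofLp '' T) ^ d := by
        gcongr
        exact Real.volume_pi_le_diam_pow _
    _ ≤ (NNReal.sqrt d : ℝ≥0∞) ^ d * Metric.ediam T ^ d := by
        gcongr
        simpa using (PiLp.lipschitzWith_ofLp 2 (fun _ : ι => ℝ)).ediam_image_le T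

end EuclideanSpace

lemma OuterMeasure.le_boundedBy_of_forall_inter_le {X : Type*} {μ : OuterMeasure X}
    {m : Set X → ℝ≥0∞} {K : Set X} (h : ∀ s, μ (s ∩ K) ≤ m s) :
    μ K ≤ OuterMeasure.boundedBy m K := by
  have hle : OuterMeasure.restrict K μ ≤ OuterMeasure.boundedBy m :=
    OuterMeasure.le_boundedBy.2 fun s => by simpa [OuterMeasure.restrict_apply] using h s
  simpa [OuterMeasure.restrict_apply] using hle K

lemma LipschitzWith.toLp_prod_graph {E F : Type*} [PseudoEMetricSpace E] [PseudoEMetricSpace F]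
    {L : ℝ≥0} {f : E → F} (hf : LipschitzWith L f) :
    LipschitzWith (NNReal.sqrt 2 * max 1 L) fun y => WithLp.toLp 2 (y, f y) := by
  convert (WithLp.prod_lipschitzWith_toLp 2 E F).comp (LipschitzWith.id.prodMk hf) using 1
  · rw [NNReal.sqrt_eq_rpow]
    norm_num
  · rfl

lemma hausdorffMeasure_inter_le_mul_ediam_pow {ι X : Type*} [Fintype ι] [EMetricSpace X]
    [MeasurableSpace X] [BorelSpace X] {g : EuclideanSpace ℝ ι → X} {π : X → EuclideanSpace ℝ ι}
    {Lg Lπ : ℝ≥0} (hg : LipschitzWith Lg g) (hπ : LipschitzWith Lπ π) {K : Set X}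
    (hK : Set.EqOn (g ∘ π) id K) (s : Set X) :
    μH[Fintype.card ι] (s ∩ K) ≤
      ((Lg * Lπ * NNReal.sqrt (Fintype.card ι) : ℝ≥0) : ℝ≥0∞) ^ Fintype.card ι *
        Metric.ediam s ^ Fintype.card ι := by
  set d := Fintype.card ι
  have hsub : s ∩ K ⊆ g '' (π '' (s ∩ K)) := fun x hx =>
    ⟨π x, Set.mem_image_of_mem π hx, hK hx.2⟩
  calc μH[d] (s ∩ K) ≤ μH[d] (g '' (π '' (s ∩ K))) := measure_mono hsub
    _ ≤ (Lg : ℝ≥0∞) ^ d * μH[d] (π '' (s ∩ K)) := by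
        simpa using hg.hausdorffMeasure_image_le (d := d) (by positivity) _
    _ ≤ (Lg : ℝ≥0∞) ^ d * ((NNReal.sqrt d : ℝ≥0∞) ^ d * Metric.ediam (π '' (s ∩ K)) ^ d) := by
        gcongr
        exact EuclideanSpace.hausdorffMeasure_le_mul_ediam_pow _
    _ ≤ (Lg : ℝ≥0∞) ^ d * ((NNReal.sqrt d : ℝ≥0∞) ^ d * (Lπ * Metric.ediam s) ^ d) := by
        gcongr
        exact (hπ.ediam_image_le _).trans (by gcongr; exact Set.inter_subset_left)
    _ = _ := by push_cast; ring

theorem hausdorffContent_ge_const_mul_hausdorffMeasure_of_lipschitzGraph_general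
    (n : ℕ) (L : ℝ≥0) :
    ∃ c : ℝ, 0 < c ∧
      ∀ (f : EuclideanSpace ℝ (Fin (n - 1)) → ℝ), LipschitzWith L f →
      ∀ (e : WithLp 2 (EuclideanSpace ℝ (Fin (n - 1)) × ℝ) ≃ₗᵢ[ℝ]
            EuclideanSpace ℝ (Fin n))
        (K : Set (EuclideanSpace ℝ (Fin n))),
        K ⊆ Set.range (fun y => e ((WithLp.equiv 2 _).symm (y, f y))) →
        ENNReal.ofReal c * μH[(n - 1 : ℕ)] K ≤ hausdorffContent n K := by
  set C : ℝ≥0 := (NNReal.sqrt 2 * max 1 L * NNReal.sqrt (n - 1 : ℕ)) ^ (n - 1)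
  refine ⟨((C + 1)⁻¹ : ℝ≥0), by positivity, fun f hf e K hK => ?_⟩
  have hg : LipschitzWith (NNReal.sqrt 2 * max 1 L) fun y => e (WithLp.toLp 2 (y, f y)) := by
    have h := e.lipschitz.comp hf.toLp_prod_graph
    rwa [one_mul] at h
  have hπ : LipschitzWith 1 fun x => (e.symm x).fst := by
    have h := (LipschitzWith.of_edist_le WithLp.edist_fst_le).comp e.symm.lipschitz
    rwa [one_mul] at h
  have hKπ : Set.EqOn ((fun y => e (WithLp.toLp 2 (y, f y))) ∘ fun x => (e.symm x).fst) id K := by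
    rintro _ hx
    obtain ⟨y, rfl⟩ := hK hx
    simp
  have hcC : (((C + 1)⁻¹ : ℝ≥0) : ℝ≥0∞) * C ≤ 1 := by
    rw [← ENNReal.coe_mul, ENNReal.coe_le_one_iff, inv_mul_le_iff₀ (by positivity), mul_one]
    exact le_self_add
  rw [ENNReal.ofReal_coe_nnreal]
  refine OuterMeasure.le_boundedBy_of_forall_inter_le
    (μ := (((C + 1)⁻¹ : ℝ≥0) : ℝ≥0∞) • μH[(n - 1 : ℕ)].toOuterMeasure) fun s => ?_
  have hs := hausdorffMeasure_inter_le_mul_ediam_pow hg hπ hKπ s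
  simp only [Fintype.card_fin] at hs
  calc _ = (((C + 1)⁻¹ : ℝ≥0) : ℝ≥0∞) * μH[(n - 1 : ℕ)] (s ∩ K) := rfl
    _ ≤ (((C + 1)⁻¹ : ℝ≥0) : ℝ≥0∞) * (C * Metric.ediam s ^ (n - 1)) := by
        gcongr
        simpa [C] using hs
    _ ≤ Metric.ediam s ^ (n - 1) := by
        rw [← mul_assoc]; exact mul_le_of_le_one_left' hcC

/-- For `n ≥ 2` and an `L`-Lipschitz function `f : ℝ^{n-1} → ℝ`, there is
a constant `c(n,L) > 0` such that for every subset `K` of the graph of `f` (embedded in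
`ℝ^n` via the natural isometric identification `ℝ^{n-1} × ℝ ≅ ℝ^n`),
`𝓗^{n-1}_∞(K) ≥ c(n,L) · 𝓗^{n-1}(K)`. -/
theorem hausdorffContent_ge_const_mul_hausdorffMeasure_of_lipschitzGraph
    (n : ℕ) (hn : 2 ≤ n) (L : ℝ≥0) :
    ∃ c : ℝ, 0 < c ∧
      ∀ (f : EuclideanSpace ℝ (Fin (n - 1)) → ℝ), LipschitzWith L f →
      ∀ (e : WithLp 2 (EuclideanSpace ℝ (Fin (n - 1)) × ℝ) ≃ₗᵢ[ℝ]
            EuclideanSpace ℝ (Fin n))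
        (K : Set (EuclideanSpace ℝ (Fin n))),
        K ⊆ Set.range (fun y => e ((WithLp.equiv 2 _).symm (y, f y))) →
        ENNReal.ofReal c * μH[(n - 1 : ℕ)] K ≤ hausdorffContent n K :=
  hausdorffContent_ge_const_mul_hausdorffMeasure_of_lipschitzGraph_general n L
end

section
/- Upper comparability on Lipschitz domains (Theorem 4.1): let n ≥ 2, L > 0, and N ∈ ℕ. There exists a constant C > 0, depending only on n, L and N, such that for every bounded open set Ω ⊆ ℝ^n with Lipschitz boundary of character (L, N) and every real λ > 0, μ_λ(Ω) ≤ C · ( vol(Ω) + λ · 𝓗^{n-1}(∂Ω) ), where vol is Lebesgue measure, ∂Ω = frontier Ω, and 𝓗^{n-1} is the (n−1)-dimensional Hausdorff measure. -/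
open MeasureTheory
open scoped ENNReal NNReal

/-- A set `Ω ⊆ ℝ^n` has Lipschitz boundary of character `(L, N)`: there are `N` open sets
`W j` covering `∂Ω`, and for each `j` a rigid motion (isometry) `g j` of `ℝ^n` and an
`L`-Lipschitz function `f j : ℝ^{n-1} → ℝ` such that, under an isometric identification
`e : ℝ^n ≅ ℝ^{n-1} × ℝ`, the image `g j (Ω)` coincides inside `g j (W j)` with the
subgraph `{ (y, s) : s < f j y }`. -/
def HasLipschitzBoundaryChar (n : ℕ) (L : ℝ≥0) (N : ℕ)
    (Ω : Set (EuclideanSpace ℝ (Fin n))) : Prop :=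
  ∃ (e : EuclideanSpace ℝ (Fin n) ≃ₗᵢ[ℝ]
        WithLp 2 (EuclideanSpace ℝ (Fin (n - 1)) × ℝ))
    (W : Fin N → Set (EuclideanSpace ℝ (Fin n)))
    (g : Fin N → (EuclideanSpace ℝ (Fin n) ≃ᵢ EuclideanSpace ℝ (Fin n)))
    (f : Fin N → EuclideanSpace ℝ (Fin (n - 1)) → ℝ),
    (∀ j, IsOpen (W j)) ∧
    frontier Ω ⊆ ⋃ j, W j ∧
    (∀ j, LipschitzWith L (f j)) ∧
    (∀ j, (g j '' Ω) ∩ (g j '' W j) =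
      {x | (WithLp.equiv 2 _ (e x)).2 < f j (WithLp.equiv 2 _ (e x)).1} ∩ (g j '' W j))

/-!
Subdivide ℝⁿ dyadically, starting from cubes of side `λ`, and stop at the first cube `Q` (of
side `t`) that is either *boundary-rich*, `𝓗ⁿ⁻¹(Q ∩ ∂Ω) ≥ c tⁿ⁻¹`, or *nearly full*,
`|Q ∩ Ω| ≥ (1 - b) tⁿ`. These maximal cubes are disjoint, and they cover the open set `Ω` because
every point of `Ω` lies in a small cube contained in `Ω`. A cube of side `t ≤ λ` has gauge
`diamⁿ + λ diamⁿ⁻¹ ≲ λ tⁿ⁻¹`, which is paid for by `λ 𝓗ⁿ⁻¹(Q ∩ ∂Ω)` when `Q` is rich and by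
`|Q ∩ Ω|` when `Q` is nearly full of side `λ`. A maximal cube of side `t < λ` is rich: its parent `P`
is neither rich nor nearly full, and by the relative isoperimetric inequality
`|P ∩ Ω| |P \ Ω| ≤ n 𝓗ⁿ⁻¹(P ∩ ∂Ω) sⁿ⁺¹` for a cube of side `s` (a staircase path between two
points of `P` crosses `∂Ω` at a point whose projection along the crossing direction determines
all but two of the `2n` coordinates of the pair), a cube with little boundary is nearly empty or
nearly full; a nearly full cube cannot lie in the nearly empty cube `P` of twice its side.
-/

theorem IsPreconnected.inter_frontier_nonempty {X : Type*} [TopologicalSpace X] {s t : Set X}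
    (hs : IsPreconnected s) (hst : (s ∩ t).Nonempty) (hst' : (s \ t).Nonempty) :
    (s ∩ frontier t).Nonempty := by
  by_contra h
  have hcover : s ⊆ interior t ∪ interior tᶜ := fun x hx => by
    have : x ∉ frontier t := fun hx' => h ⟨x, hx, hx'⟩
    rw [frontier, Set.mem_sdiff, not_and_not_right, ← compl_compl (closure t),
      ← interior_compl] at this
    by_cases hx' : x ∈ interior t
    · exact Or.inl hx'
    · exact Or.inr (by simpa [hx'] using this)
  obtain ⟨x, hxs, hxt⟩ := hst
  obtain ⟨x', hxs', hxt'⟩ := hst'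
  obtain ⟨y, -, hy, hy'⟩ := hs _ _ isOpen_interior isOpen_interior hcover
    ⟨x, hxs, (hcover hxs).resolve_right fun h => interior_subset h hxt⟩
    ⟨x', hxs', (hcover hxs').resolve_left fun h => hxt' (interior_subset h)⟩
  exact interior_subset hy' (interior_subset hy)

theorem Nat.exists_lt_and_not_succ {p : ℕ → Prop} {n : ℕ} (h₀ : p 0) (hn : ¬p n) :
    ∃ j < n, p j ∧ ¬p (j + 1) := by
  induction n with
  | zero => exact absurd h₀ hn
  | succ n ih =>
    by_cases h : p n
    · exact ⟨n, n.lt_add_one, h, hn⟩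
    · obtain ⟨j, hj, hj'⟩ := ih h
      exact ⟨j, by omega, hj'⟩

theorem le_mul_of_add_eq_of_mul_le {a a' b T : ℝ} (hsum : a + a' = T)
    (hprod : a * a' ≤ b * (1 - b) * T ^ 2) (ha : a < (1 - b) * T) : a ≤ b * T := by
  subst hsum
  by_contra! h
  nlinarith [mul_pos (sub_pos.2 h) (sub_pos.2 ha)]

theorem EuclideanSpace.dist_le_sqrt_card_mul {ι : Type*} [Fintype ι] {x y : EuclideanSpace ℝ ι}
    {t : ℝ} (ht : 0 ≤ t) (h : ∀ i, dist (x i) (y i) ≤ t) :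
    dist x y ≤ √(Fintype.card ι) * t := by
  have hsum : ∑ i, dist (x i) (y i) ^ 2 ≤ Fintype.card ι * t ^ 2 := by
    simpa using Finset.sum_le_sum fun i (_ : i ∈ Finset.univ) =>
      pow_le_pow_left₀ dist_nonneg (h i) 2
  rw [EuclideanSpace.dist_eq, ← Real.sqrt_sq ht, ← Real.sqrt_mul (Nat.cast_nonneg _)]
  exact Real.sqrt_le_sqrt hsum

theorem EuclideanSpace.apply_eq_of_mem_segment {ι : Type*} {u v w : EuclideanSpace ℝ ι} {i : ι}
    (hw : w ∈ segment ℝ u v) (huv : u i = v i) : w i = u i := by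
  obtain ⟨a, b, -, -, hab, rfl⟩ := hw
  simp [huv, ← add_mul, hab]

theorem MeasureTheory.volume_pi_cylinder {ι κ : Type*} [Fintype ι] [Fintype κ] {ρ : κ → ι}
    (hρ : Function.Injective ρ) (C : Set (κ → ℝ)) {I : ι → Set ℝ} {r : ℝ≥0∞}
    (hI : ∀ i, volume (I i) = r) :
    volume {w : ι → ℝ | w ∘ ρ ∈ C ∧ ∀ i ∉ Set.range ρ, w i ∈ I i} =
      volume C * r ^ (Fintype.card ι - Fintype.card κ) := by
  classical
  let e : κ ⊕ ↥(Set.range ρ)ᶜ ≃ ι :=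
    (Equiv.sumCongr (Equiv.ofInjective ρ hρ) (Equiv.refl _)).trans (Equiv.Set.sumCompl _)
  let Ψ := (MeasurableEquiv.sumPiEquivProdPi fun _ => ℝ).symm.trans
    (MeasurableEquiv.piCongrLeft (fun _ => ℝ) e)
  have hΨ : MeasurePreserving Ψ volume volume :=
    (volume_measurePreserving_sumPiEquivProdPi_symm _).trans
      (volume_measurePreserving_piCongrLeft _ e)
  have hpre : Ψ ⁻¹' {w | w ∘ ρ ∈ C ∧ ∀ i ∉ Set.range ρ, w i ∈ I i} =
      C ×ˢ Set.univ.pi fun i : ↥(Set.range ρ)ᶜ => I i := by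
    ext ⟨f, g⟩
    have h₁ : Ψ (f, g) ∘ ρ = f := funext fun k =>
      Equiv.piCongrLeft_sumInl (fun _ => ℝ) e f g k
    have h₂ : ∀ i : ↥(Set.range ρ)ᶜ, Ψ (f, g) i = g i := fun i =>
      Equiv.piCongrLeft_sumInr (fun _ => ℝ) e f g i
    simp only [Set.mem_preimage, Set.mem_ofPred_eq, h₁, Set.mem_prod, Set.mem_univ_pi]
    exact and_congr_right' ⟨fun h i => h₂ i ▸ h i i.2, fun h i hi => h₂ ⟨i, hi⟩ ▸ h ⟨i, hi⟩⟩
  have hcard : Fintype.card ↥(Set.range ρ)ᶜ = Fintype.card ι - Fintype.card κ := by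
    rw [Fintype.card_compl_set, Set.card_range_of_injective hρ]
  rw [← hΨ.measure_preimage_equiv, hpre, Measure.volume_eq_prod, Measure.prod_prod, volume_pi_pi]
  simp [hI, hcard]

theorem MeasureTheory.OuterMeasure.boundedBy_le_measure_biUnion {α ι : Type*}
    [MeasurableSpace α] [Countable ι] {m : Set α → ℝ≥0∞} (μ : Measure α) {s : Set α}
    {L : Set ι} {Q : ι → Set α} (hs : s ⊆ ⋃ i ∈ L, Q i) (hL : L.PairwiseDisjoint Q)
    (hQ : ∀ i ∈ L, MeasurableSet (Q i)) (hm : ∀ i ∈ L, m (Q i) ≤ μ (Q i)) :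
    boundedBy m s ≤ μ (⋃ i ∈ L, Q i) :=
  calc boundedBy m s ≤ ∑' i : L, boundedBy m (Q i) :=
        (measure_mono hs).trans (measure_biUnion_le _ L.to_countable _)
    _ ≤ ∑' i : L, μ (Q i) := ENNReal.tsum_le_tsum fun i => (boundedBy_le _).trans (hm i i.2)
    _ = μ (⋃ i ∈ L, Q i) := (measure_biUnion L.to_countable hL hQ).symm

namespace MixedGauge

section Cubes

variable {ι : Type*} {t : ℝ} {z : ι → ℤ} {x : EuclideanSpace ℝ ι}

noncomputable def cubeIndex (t : ℝ) (x : EuclideanSpace ℝ ι) : ι → ℤ := fun i => ⌊x i / t⌋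

def cube (t : ℝ) (z : ι → ℤ) : Set (EuclideanSpace ℝ ι) :=
  {x | ∀ i, x i ∈ Set.Ico (z i * t) ((z i + 1) * t)}

theorem mem_cube_iff_cubeIndex_eq (ht : 0 < t) : x ∈ cube t z ↔ cubeIndex t x = z := by
  simp only [cube, cubeIndex, Set.mem_ofPred_eq, Set.mem_Ico, funext_iff, Int.floor_eq_iff,
    le_div_iff₀ ht, div_lt_iff₀ ht]

theorem mem_cube_cubeIndex (ht : 0 < t) (x : EuclideanSpace ℝ ι) : x ∈ cube t (cubeIndex t x) :=
  (mem_cube_iff_cubeIndex_eq ht).2 rfl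

theorem cube_nonempty (ht : 0 < t) (z : ι → ℤ) : (cube t z).Nonempty :=
  ⟨WithLp.toLp 2 fun i => z i * t, fun i => ⟨le_rfl, by simp only; nlinarith⟩⟩

theorem cubeIndex_natCast_mul (m : ℕ) (t : ℝ) (x : EuclideanSpace ℝ ι) :
    cubeIndex (m * t) x = fun i => cubeIndex t x i / m := by
  funext i
  rw [cubeIndex, cubeIndex, div_mul_eq_div_div_swap, Int.floor_div_natCast]

theorem cubeIndex_div_two_pow_eq_of_le {lam : ℝ} {j k : ℕ} (hjk : j ≤ k)
    {x y : EuclideanSpace ℝ ι} (h : cubeIndex (lam / 2 ^ k) x = cubeIndex (lam / 2 ^ k) y) :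
    cubeIndex (lam / 2 ^ j) x = cubeIndex (lam / 2 ^ j) y := by
  obtain ⟨m, rfl⟩ := Nat.exists_eq_add_of_le hjk
  have hscale : lam / 2 ^ j = ((2 ^ m : ℕ) : ℝ) * (lam / 2 ^ (j + m)) := by
    push_cast
    rw [pow_add]
    field_simp
  rw [hscale, cubeIndex_natCast_mul, cubeIndex_natCast_mul, h]

theorem cube_eq_preimage (t : ℝ) (z : ι → ℤ) :
    cube t z = (MeasurableEquiv.toLp 2 (ι → ℝ)).symm ⁻¹'
      Set.univ.pi fun i => Set.Ico (z i * t) ((z i + 1) * t) := by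
  ext x
  simp [cube]

theorem measurableSet_cube [Fintype ι] (t : ℝ) (z : ι → ℤ) : MeasurableSet (cube t z) := by
  rw [cube_eq_preimage]
  exact (MeasurableEquiv.measurable _) (MeasurableSet.univ_pi fun _ => measurableSet_Ico)

theorem volume_cube [Fintype ι] (t : ℝ) (z : ι → ℤ) :
    volume (cube t z) = ENNReal.ofReal t ^ Fintype.card ι := by
  rw [cube_eq_preimage, (EuclideanSpace.volume_preserving_symm_measurableEquiv_toLp ι)
    |>.measure_preimage_equiv, volume_pi_pi]
  simp [Real.volume_Ico, add_mul]

theorem convex_cube [Fintype ι] (t : ℝ) (z : ι → ℤ) : Convex ℝ (cube t z) := by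
  rw [cube_eq_preimage]
  exact (convex_pi fun i _ => convex_Ico _ _).linear_preimage
    (WithLp.linearEquiv 2 ℝ (ι → ℝ)).toLinearMap

theorem dist_le_of_mem_cube [Fintype ι] (ht : 0 ≤ t) {y : EuclideanSpace ℝ ι}
    (hx : x ∈ cube t z) (hy : y ∈ cube t z) : dist x y ≤ √(Fintype.card ι) * t := by
  refine EuclideanSpace.dist_le_sqrt_card_mul ht fun i => ?_
  obtain ⟨hx₁, hx₂⟩ := hx i
  obtain ⟨hy₁, hy₂⟩ := hy i
  rw [Real.dist_eq, abs_sub_le_iff]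
  constructor <;> linarith

end Cubes

variable {d : ℕ}

section Isoperimetry

def stairPoint (x x' : EuclideanSpace ℝ (Fin (d + 1))) (j : ℕ) :
    EuclideanSpace ℝ (Fin (d + 1)) :=
  WithLp.toLp 2 fun i => if (i : ℕ) < j then x' i else x i

def dropCoord (j : Fin (d + 1)) (x : EuclideanSpace ℝ (Fin (d + 1))) : Fin d → ℝ :=
  fun k => x (j.succAbove k)

theorem lipschitzWith_dropCoord (j : Fin (d + 1)) : LipschitzWith 1 (dropCoord j) :=
  LipschitzWith.mk_one fun x y =>
    (dist_pi_le_iff dist_nonneg).2 fun _ => PiLp.dist_apply_le x y _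

theorem stairPoint_mem_cube {t : ℝ} {z : Fin (d + 1) → ℤ}
    {x x' : EuclideanSpace ℝ (Fin (d + 1))} (hx : x ∈ cube t z) (hx' : x' ∈ cube t z) (j : ℕ) :
    stairPoint x x' j ∈ cube t z := by
  intro i
  simp only [stairPoint]
  split_ifs
  exacts [hx' i, hx i]

/-- Walking from `x ∈ Ω` to `x' ∉ Ω` along the coordinate directions, one step crosses `∂Ω`;
off the direction `j` of that step, the crossing point has the coordinates of
`stairPoint x x' j`. -/
theorem exists_dropCoord_stairPoint_mem {Ω : Set (EuclideanSpace ℝ (Fin (d + 1)))} {t : ℝ}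
    {z : Fin (d + 1) → ℤ} {x x' : EuclideanSpace ℝ (Fin (d + 1))} (hx : x ∈ cube t z ∩ Ω)
    (hx' : x' ∈ cube t z \ Ω) :
    ∃ j : Fin (d + 1),
      dropCoord j (stairPoint x x' j) ∈ dropCoord j '' (cube t z ∩ frontier Ω) := by
  have hfirst : stairPoint x x' 0 ∈ Ω := by simpa [stairPoint] using hx.2
  have hlast : stairPoint x x' (d + 1) ∉ Ω := by
    convert hx'.2
    ext i
    simp [stairPoint, Nat.lt_succ_iff.1 i.isLt]
  obtain ⟨j, hj, hjΩ, hjΩ'⟩ :=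
    Nat.exists_lt_and_not_succ (p := fun j => stairPoint x x' j ∈ Ω) hfirst hlast
  obtain ⟨b, hbseg, hbF⟩ := (convex_segment (stairPoint x x' j) (stairPoint x x' (j + 1)))
    |>.isPreconnected.inter_frontier_nonempty
      ⟨_, left_mem_segment ℝ _ _, hjΩ⟩ ⟨_, right_mem_segment ℝ _ _, hjΩ'⟩
  have hbQ : b ∈ cube t z := (convex_cube t z).segment_subset
    (stairPoint_mem_cube hx.1 hx'.1 j) (stairPoint_mem_cube hx.1 hx'.1 (j + 1)) hbseg
  refine ⟨⟨j, hj⟩, ⟨b, ⟨hbQ, hbF⟩, funext fun k => ?_⟩⟩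
  refine EuclideanSpace.apply_eq_of_mem_segment hbseg ?_
  have hk : ((Fin.succAbove ⟨j, hj⟩ k : Fin (d + 1)) : ℕ) ≠ j :=
    Fin.val_ne_of_ne (Fin.succAbove_ne _ k)
  simp only [stairPoint]
  split_ifs <;> first | rfl | omega

def pairCoords (ι : Type*) [Fintype ι] :
    EuclideanSpace ℝ ι × EuclideanSpace ℝ ι ≃ᵐ (ι ⊕ ι → ℝ) :=
  ((MeasurableEquiv.toLp 2 _).symm.prodCongr (MeasurableEquiv.toLp 2 _).symm).trans
    (MeasurableEquiv.sumPiEquivProdPi fun _ => ℝ).symm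

theorem measurePreserving_pairCoords (ι : Type*) [Fintype ι] :
    MeasurePreserving (pairCoords ι) volume volume :=
  ((EuclideanSpace.volume_preserving_symm_measurableEquiv_toLp ι).prod
    (EuclideanSpace.volume_preserving_symm_measurableEquiv_toLp ι)).trans
    (volume_measurePreserving_sumPiEquivProdPi_symm _)

def stairCoords (j : Fin (d + 1)) (k : Fin d) : Fin (d + 1) ⊕ Fin (d + 1) :=
  if j.succAbove k < j then .inr (j.succAbove k) else .inl (j.succAbove k)

theorem stairCoords_injective (j : Fin (d + 1)) : Function.Injective (stairCoords j) := by
  intro k k' h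
  unfold stairCoords at h
  split_ifs at h <;> simp_all

theorem pairCoords_comp_stairCoords (j : Fin (d + 1)) (x x' : EuclideanSpace ℝ (Fin (d + 1))) :
    pairCoords _ (x, x') ∘ stairCoords j = dropCoord j (stairPoint x x' j) := by
  funext k
  simp only [Function.comp_apply, stairCoords, dropCoord, stairPoint, Fin.lt_def]
  split_ifs <;> rfl

theorem volume_stairCylinder_le (F : Set (EuclideanSpace ℝ (Fin (d + 1)))) (j : Fin (d + 1))
    {I : Fin (d + 1) ⊕ Fin (d + 1) → Set ℝ} {r : ℝ≥0∞} (hI : ∀ i, volume (I i) = r) :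
    volume {w | w ∘ stairCoords j ∈ dropCoord j '' F ∧
      ∀ i ∉ Set.range (stairCoords j), w i ∈ I i} ≤ μH[d] F * r ^ (d + 2) := by
  have hcard : Fintype.card (Fin (d + 1) ⊕ Fin (d + 1)) - Fintype.card (Fin d) = d + 2 := by
    simp only [Fintype.card_sum, Fintype.card_fin]
    omega
  rw [volume_pi_cylinder (stairCoords_injective j) _ hI, hcard]
  gcongr
  calc volume (dropCoord j '' F) = μH[d] (dropCoord j '' F) := by
        rw [← hausdorffMeasure_pi_real, Fintype.card_fin]
    _ ≤ μH[d] F := by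
        simpa using (lipschitzWith_dropCoord j).hausdorffMeasure_image_le (Nat.cast_nonneg d) F

theorem volume_inter_mul_volume_diff_le (Ω : Set (EuclideanSpace ℝ (Fin (d + 1)))) (t : ℝ)
    (z : Fin (d + 1) → ℤ) :
    volume (cube t z ∩ Ω) * volume (cube t z \ Ω) ≤
      (d + 1) * μH[d] (cube t z ∩ frontier Ω) * ENNReal.ofReal t ^ (d + 2) := by
  set F := cube t z ∩ frontier Ω
  let I : Fin (d + 1) ⊕ Fin (d + 1) → Set ℝ := fun i =>
    Set.Ico (Sum.elim z z i * t) ((Sum.elim z z i + 1) * t)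
  let cyl : Fin (d + 1) → Set (Fin (d + 1) ⊕ Fin (d + 1) → ℝ) := fun j =>
    {w | w ∘ stairCoords j ∈ dropCoord j '' F ∧ ∀ i ∉ Set.range (stairCoords j), w i ∈ I i}
  have hcover : (cube t z ∩ Ω) ×ˢ (cube t z \ Ω) ⊆ ⋃ j, pairCoords _ ⁻¹' cyl j := by
    rintro ⟨x, x'⟩ ⟨hx, hx'⟩
    obtain ⟨j, hj⟩ := exists_dropCoord_stairPoint_mem hx hx'
    refine Set.mem_iUnion.2 ⟨j, ?_, ?_⟩
    · rwa [pairCoords_comp_stairCoords]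
    · rintro (i | i) -
      exacts [hx.1 i, hx'.1 i]
  calc volume (cube t z ∩ Ω) * volume (cube t z \ Ω)
      = volume ((cube t z ∩ Ω) ×ˢ (cube t z \ Ω)) := by
        rw [Measure.volume_eq_prod, Measure.prod_prod]
    _ ≤ ∑ j, volume (pairCoords _ ⁻¹' cyl j) :=
        (measure_mono hcover).trans (measure_iUnion_fintype_le _ _)
    _ = ∑ j, volume (cyl j) := by
        simp only [(measurePreserving_pairCoords _).measure_preimage_equiv]
    _ ≤ ∑ _j : Fin (d + 1), μH[d] F * ENNReal.ofReal t ^ (d + 2) :=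
        Finset.sum_le_sum fun j _ =>
          volume_stairCylinder_le F j fun i => by simp [I, Real.volume_Ico, add_mul]
    _ = (d + 1) * μH[d] F * ENNReal.ofReal t ^ (d + 2) := by
        simp [mul_assoc]

end Isoperimetry

section Constants

noncomputable def volFrac (d : ℕ) : ℝ := (2 ^ (d + 3))⁻¹

noncomputable def areaFrac (d : ℕ) : ℝ := volFrac d * (1 - volFrac d) / (d + 1)

noncomputable def diamFactor (d : ℕ) : ℝ := √((d : ℝ) + 1) ^ (d + 1) + √((d : ℝ) + 1) ^ d

noncomputable def gaugeConst (d : ℕ) : ℝ := diamFactor d / areaFrac d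

theorem volFrac_pos (d : ℕ) : 0 < volFrac d := by
  unfold volFrac
  positivity

theorem volFrac_mul_two_pow (d : ℕ) : volFrac d * 2 ^ (d + 1) = 4⁻¹ := by
  rw [volFrac, pow_add 2 (d + 1) 2]
  field_simp
  norm_num

theorem volFrac_le (d : ℕ) : volFrac d ≤ 4⁻¹ := by
  have := volFrac_mul_two_pow d
  nlinarith [one_le_pow₀ (M₀ := ℝ) one_le_two (n := d + 1), volFrac_pos d]

theorem areaFrac_pos (d : ℕ) : 0 < areaFrac d := by
  have := volFrac_le d
  have := volFrac_pos d
  unfold areaFrac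
  apply div_pos <;> nlinarith

theorem areaFrac_le (d : ℕ) : areaFrac d ≤ 1 - volFrac d := by
  have := volFrac_le d
  have := volFrac_pos d
  rw [areaFrac, div_le_iff₀ (by positivity)]
  nlinarith [(Nat.cast_nonneg d : (0 : ℝ) ≤ d)]

theorem gaugeConst_pos (d : ℕ) : 0 < gaugeConst d :=
  div_pos (by unfold diamFactor; positivity) (areaFrac_pos d)

end Constants

section Stopping

variable (Ω : Set (EuclideanSpace ℝ (Fin (d + 1))))

def BoundaryRich (t : ℝ) (z : Fin (d + 1) → ℤ) : Prop :=
  ENNReal.ofReal (areaFrac d * t ^ d) ≤ μH[d] (cube t z ∩ frontier Ω)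

def NearlyFull (t : ℝ) (z : Fin (d + 1) → ℤ) : Prop :=
  ENNReal.ofReal ((1 - volFrac d) * t ^ (d + 1)) ≤ volume (cube t z ∩ Ω)

def IsStopping (t : ℝ) (z : Fin (d + 1) → ℤ) : Prop :=
  BoundaryRich Ω t z ∨ NearlyFull Ω t z

/-- The maximal stopping cubes, as pairs `(k, z)` standing for `cube (lam / 2 ^ k) z`. -/
def leaves (lam : ℝ) : Set (ℕ × (Fin (d + 1) → ℤ)) :=
  {q | IsStopping Ω (lam / 2 ^ q.1) q.2 ∧
    ∀ j < q.1, ∀ x ∈ cube (lam / 2 ^ q.1) q.2,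
      ¬IsStopping Ω (lam / 2 ^ j) (cubeIndex (lam / 2 ^ j) x)}

variable {Ω} {lam : ℝ}

theorem volume_cube_inter_le_of_not_isStopping (hΩ : MeasurableSet Ω) {t : ℝ} (ht : 0 < t)
    {z : Fin (d + 1) → ℤ} (hrich : ¬BoundaryRich Ω t z) (hfull : ¬NearlyFull Ω t z) :
    volume (cube t z ∩ Ω) ≤ ENNReal.ofReal (volFrac d * t ^ (d + 1)) := by
  rw [BoundaryRich, not_le] at hrich
  rw [NearlyFull, not_le] at hfull
  set A := volume (cube t z ∩ Ω)
  set A' := volume (cube t z \ Ω)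
  have hvol : A + A' = ENNReal.ofReal (t ^ (d + 1)) := by
    rw [measure_inter_add_sdiff _ hΩ, volume_cube, ENNReal.ofReal_pow ht.le, Fintype.card_fin]
  have hA : A ≠ ⊤ := ne_top_of_le_ne_top ENNReal.ofReal_ne_top (hvol ▸ le_self_add)
  have hA' : A' ≠ ⊤ := ne_top_of_le_ne_top ENNReal.ofReal_ne_top (hvol ▸ le_add_self)
  have hprod : A * A' ≤ ENNReal.ofReal (volFrac d * (1 - volFrac d) * (t ^ (d + 1)) ^ 2) :=
    calc A * A' ≤ (d + 1) * μH[d] (cube t z ∩ frontier Ω) * ENNReal.ofReal t ^ (d + 2) :=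
          volume_inter_mul_volume_diff_le Ω t z
      _ ≤ ENNReal.ofReal (d + 1) * ENNReal.ofReal (areaFrac d * t ^ d) *
          ENNReal.ofReal t ^ (d + 2) := by
          rw [ENNReal.ofReal_add (Nat.cast_nonneg d) zero_le_one, ENNReal.ofReal_natCast,
            ENNReal.ofReal_one]
          gcongr
      _ = ENNReal.ofReal (volFrac d * (1 - volFrac d) * (t ^ (d + 1)) ^ 2) := by
          rw [← ENNReal.ofReal_pow ht.le, ← ENNReal.ofReal_mul (by positivity),
            ← ENNReal.ofReal_mul (mul_pos (by positivity)
              (mul_pos (areaFrac_pos d) (pow_pos ht d))).le]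
          congr 1
          rw [areaFrac]
          field_simp
          ring
  rw [ENNReal.le_ofReal_iff_toReal_le hA (mul_pos (volFrac_pos d) (pow_pos ht _)).le]
  refine le_mul_of_add_eq_of_mul_le (a' := A'.toReal) ?_ ?_ (ENNReal.toReal_lt_of_lt_ofReal hfull)
  · rw [← ENNReal.toReal_add hA hA', hvol, ENNReal.toReal_ofReal (by positivity)]
  · rw [← ENNReal.toReal_mul]
    have := volFrac_le d
    exact ENNReal.toReal_le_of_le_ofReal
      (mul_nonneg (mul_nonneg (volFrac_pos d).le (by linarith)) (sq_nonneg _)) hprod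

theorem exists_nearlyFull (hΩ : IsOpen Ω) (hlam : 0 < lam) {x : EuclideanSpace ℝ (Fin (d + 1))}
    (hx : x ∈ Ω) : ∃ k, NearlyFull Ω (lam / 2 ^ k) (cubeIndex (lam / 2 ^ k) x) := by
  obtain ⟨ε, hε, hball⟩ := Metric.isOpen_iff.1 hΩ x hx
  have hsmall : Filter.Tendsto (fun k : ℕ => √(d + 1 : ℕ) * (lam / 2 ^ k)) Filter.atTop
      (nhds 0) := by
    simpa [div_eq_mul_inv, mul_assoc] using ((tendsto_pow_atTop_nhds_zero_of_lt_one
      (by norm_num : (0 : ℝ) ≤ 2⁻¹) (by norm_num)).const_mul (√(d + 1 : ℕ) * lam))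
  obtain ⟨k, hk⟩ := (hsmall.eventually (gt_mem_nhds hε)).exists
  have ht : 0 < lam / 2 ^ k := by positivity
  have hsub : cube (lam / 2 ^ k) (cubeIndex (lam / 2 ^ k) x) ⊆ Ω := fun y hy =>
    hball <| Metric.mem_ball.2 <| lt_of_le_of_lt
      (by simpa using dist_le_of_mem_cube ht.le hy (mem_cube_cubeIndex ht x)) hk
  refine ⟨k, ?_⟩
  rw [NearlyFull, Set.inter_eq_left.2 hsub, volume_cube, Fintype.card_fin,
    ← ENNReal.ofReal_pow ht.le]
  exact ENNReal.ofReal_le_ofReal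
    (mul_le_of_le_one_left (by positivity) (by linarith [volFrac_pos d]))

theorem subset_biUnion_leaves (hΩ : IsOpen Ω) (hlam : 0 < lam) :
    Ω ⊆ ⋃ q ∈ leaves Ω lam, cube (lam / 2 ^ q.1) q.2 := by
  classical
  intro x hx
  have hex : ∃ k, IsStopping Ω (lam / 2 ^ k) (cubeIndex (lam / 2 ^ k) x) :=
    (exists_nearlyFull hΩ hlam hx).imp fun _ => Or.inr
  refine Set.mem_biUnion (x := (Nat.find hex, cubeIndex (lam / 2 ^ Nat.find hex) x))
    ⟨Nat.find_spec hex, fun j hj y hy => ?_⟩ (mem_cube_cubeIndex (by positivity) x)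
  rw [cubeIndex_div_two_pow_eq_of_le hj.le ((mem_cube_iff_cubeIndex_eq (by positivity)).1 hy)]
  exact Nat.find_min hex hj

theorem pairwiseDisjoint_leaves (hlam : 0 < lam) :
    (leaves Ω lam).PairwiseDisjoint fun q => cube (lam / 2 ^ q.1) q.2 := by
  have key : ∀ q ∈ leaves Ω lam, ∀ q' ∈ leaves Ω lam, q.1 ≤ q'.1 →
      ∀ x ∈ cube (lam / 2 ^ q.1) q.2, x ∈ cube (lam / 2 ^ q'.1) q'.2 → q = q' := by
    rintro ⟨k, z⟩ hq ⟨k', z'⟩ hq' (hkk' : k ≤ k') x hx hx'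
    rw [mem_cube_iff_cubeIndex_eq (by positivity)] at hx hx'
    rcases hkk'.lt_or_eq with hlt | rfl
    · exact absurd hq.1 (hx ▸ hq'.2 k hlt x ((mem_cube_iff_cubeIndex_eq (by positivity)).2 hx'))
    · exact Prod.ext rfl (hx.symm.trans hx')
  intro q hq q' hq' hne
  refine Set.disjoint_left.2 fun x hx hx' => hne ?_
  rcases le_total q.1 q'.1 with h | h
  exacts [key q hq q' hq' h x hx hx', (key q' hq' q hq h x hx' hx).symm]

theorem boundaryRich_of_succ_mem_leaves (hΩ : MeasurableSet Ω) (hlam : 0 < lam) {k : ℕ}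
    {z : Fin (d + 1) → ℤ} (hq : (k + 1, z) ∈ leaves Ω lam) :
    BoundaryRich Ω (lam / 2 ^ (k + 1)) z := by
  refine hq.1.resolve_right fun hfull => ?_
  set t := lam / 2 ^ (k + 1)
  have ht : 0 < t := by positivity
  obtain ⟨x, hx⟩ := cube_nonempty ht z
  have hsub : cube t z ⊆ cube (lam / 2 ^ k) (cubeIndex (lam / 2 ^ k) x) := fun y hy =>
    (mem_cube_iff_cubeIndex_eq (by positivity)).2 <|
      cubeIndex_div_two_pow_eq_of_le k.le_succ <|
        ((mem_cube_iff_cubeIndex_eq ht).1 hy).trans ((mem_cube_iff_cubeIndex_eq ht).1 hx).symm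
  obtain ⟨hrich, hfull'⟩ := not_or.1 (hq.2 k k.lt_succ_self x hx)
  have hle := hfull.trans ((measure_mono (Set.inter_subset_inter_left _ hsub)).trans
    (volume_cube_inter_le_of_not_isStopping hΩ (by positivity) hrich hfull'))
  have htwice : lam / 2 ^ k = 2 * t := by
    simp only [t, pow_succ]
    field_simp
  rw [ENNReal.ofReal_le_ofReal_iff (mul_pos (volFrac_pos d) (by positivity)).le, htwice,
    mul_pow, ← mul_assoc, volFrac_mul_two_pow] at hle
  nlinarith [volFrac_le d, pow_pos ht (d + 1)]

theorem areaFrac_mul_le_of_mem_leaves (hΩ : MeasurableSet Ω) (hlam : 0 < lam)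
    {q : ℕ × (Fin (d + 1) → ℤ)} (hq : q ∈ leaves Ω lam) :
    ENNReal.ofReal (areaFrac d * lam * (lam / 2 ^ q.1) ^ d) ≤
      volume (cube (lam / 2 ^ q.1) q.2 ∩ Ω) +
        ENNReal.ofReal lam * μH[d] (cube (lam / 2 ^ q.1) q.2 ∩ frontier Ω) := by
  obtain ⟨k, z⟩ := q
  have of_rich (hrich : BoundaryRich Ω (lam / 2 ^ k) z) :
      ENNReal.ofReal (areaFrac d * lam * (lam / 2 ^ k) ^ d) ≤
        volume (cube (lam / 2 ^ k) z ∩ Ω) +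
          ENNReal.ofReal lam * μH[d] (cube (lam / 2 ^ k) z ∩ frontier Ω) := by
    rw [mul_comm (areaFrac d), mul_assoc, ENNReal.ofReal_mul hlam.le]
    exact le_add_left (mul_le_mul_right hrich _)
  cases k with
  | zero =>
    refine hq.1.elim of_rich fun hfull => le_add_right (le_trans ?_ hfull)
    simp only [pow_zero, div_one]
    exact ENNReal.ofReal_le_ofReal <| by
      rw [mul_assoc, ← pow_succ']
      exact mul_le_mul_of_nonneg_right (areaFrac_le d) (by positivity)
  | succ k => exact of_rich (boundaryRich_of_succ_mem_leaves hΩ hlam hq)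

end Stopping

theorem gauge_cube_le {lam t : ℝ} (ht : 0 ≤ t) (htlam : t ≤ lam) (z : Fin (d + 1) → ℤ) :
    Metric.ediam (cube t z) ^ (d + 1) + ENNReal.ofReal lam * Metric.ediam (cube t z) ^ d ≤
      ENNReal.ofReal (diamFactor d * lam * t ^ d) := by
  set s := √((d : ℝ) + 1)
  have hdiam : Metric.ediam (cube t z) ≤ ENNReal.ofReal (s * t) :=
    Metric.ediam_le_of_forall_dist_le fun x hx y hy => by
      simpa using dist_le_of_mem_cube ht hx hy
  calc Metric.ediam (cube t z) ^ (d + 1) + ENNReal.ofReal lam * Metric.ediam (cube t z) ^ d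
      ≤ ENNReal.ofReal (s * t) ^ (d + 1) + ENNReal.ofReal lam * ENNReal.ofReal (s * t) ^ d := by
        gcongr
    _ = ENNReal.ofReal ((s * t) ^ (d + 1) + lam * (s * t) ^ d) := by
        rw [ENNReal.ofReal_add (by positivity) (by positivity [ht.trans htlam]),
          ENNReal.ofReal_mul (ht.trans htlam), ENNReal.ofReal_pow (by positivity),
          ENNReal.ofReal_pow (by positivity)]
    _ ≤ ENNReal.ofReal (diamFactor d * lam * t ^ d) := by
        refine ENNReal.ofReal_le_ofReal ?_
        have key : s ^ (d + 1) * t ^ d * t ≤ s ^ (d + 1) * t ^ d * lam := by gcongr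
        simp only [diamFactor, mul_pow, pow_succ] at key ⊢
        nlinarith [key]

theorem mixedGauge_le_of_isOpen {Ω : Set (EuclideanSpace ℝ (Fin (d + 1)))} (hΩ : IsOpen Ω) {lam : ℝ}
    (hlam : 0 < lam) :
    mixedGauge (d + 1) (ENNReal.ofReal lam) Ω ≤ ENNReal.ofReal (gaugeConst d) *
      (volume Ω + ENNReal.ofReal lam * μH[d] (frontier Ω)) := by
  let μ := ENNReal.ofReal (gaugeConst d) •
    (volume.restrict Ω + ENNReal.ofReal lam • (μH[d]).restrict (frontier Ω))
  have hpay : ∀ q ∈ leaves Ω lam, Metric.ediam (cube (lam / 2 ^ q.1) q.2) ^ (d + 1) +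
      ENNReal.ofReal lam * Metric.ediam (cube (lam / 2 ^ q.1) q.2) ^ (d + 1 - 1) ≤
        μ (cube (lam / 2 ^ q.1) q.2) := fun q hq => by
    simp only [μ, Measure.smul_apply, Measure.add_apply, smul_eq_mul,
      Measure.restrict_apply (measurableSet_cube _ _), Nat.add_sub_cancel]
    calc _ ≤ ENNReal.ofReal (diamFactor d * lam * (lam / 2 ^ q.1) ^ d) :=
          gauge_cube_le (by positivity) (div_le_self hlam.le (one_le_pow₀ one_le_two)) q.2
      _ = ENNReal.ofReal (gaugeConst d) *
          ENNReal.ofReal (areaFrac d * lam * (lam / 2 ^ q.1) ^ d) := by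
          rw [← ENNReal.ofReal_mul (gaugeConst_pos d).le, gaugeConst, div_mul_eq_mul_div,
            mul_assoc, mul_assoc, mul_div_assoc, mul_div_cancel_left₀ _ (areaFrac_pos d).ne']
      _ ≤ _ := by gcongr; exact areaFrac_mul_le_of_mem_leaves hΩ.measurableSet hlam hq
  calc mixedGauge (d + 1) (ENNReal.ofReal lam) Ω
      ≤ μ (⋃ q ∈ leaves Ω lam, cube (lam / 2 ^ q.1) q.2) :=
        OuterMeasure.boundedBy_le_measure_biUnion μ (subset_biUnion_leaves hΩ hlam)
          (pairwiseDisjoint_leaves hlam) (fun _ _ => measurableSet_cube _ _) hpay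
    _ ≤ μ Set.univ := measure_mono (Set.subset_univ _)
    _ = _ := by simp [μ, mul_add]

end MixedGauge

theorem mixedGauge_le_on_lipschitz_domains_general (n : ℕ) (hn : 2 ≤ n) (L : ℝ≥0)
    (N : ℕ) :
    ∃ C : ℝ, 0 < C ∧
      ∀ Ω : Set (EuclideanSpace ℝ (Fin n)), IsOpen Ω → Bornology.IsBounded Ω →
        HasLipschitzBoundaryChar n L N Ω →
        ∀ lam : ℝ, 0 < lam →
          mixedGauge n (ENNReal.ofReal lam) Ω ≤
            ENNReal.ofReal C *
              (volume Ω + ENNReal.ofReal lam * μH[(n - 1 : ℕ)] (frontier Ω)) := by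
  obtain ⟨d, rfl⟩ : ∃ d, n = d + 1 := ⟨n - 1, by omega⟩
  exact ⟨MixedGauge.gaugeConst d, MixedGauge.gaugeConst_pos d,
    fun Ω hΩ _ _ lam hlam => by simpa using MixedGauge.mixedGauge_le_of_isOpen hΩ hlam⟩

/-- **Upper comparability on Lipschitz domains.** For `n ≥ 2`, `L > 0`,
`N ∈ ℕ` there is `C > 0` depending only on `n, L, N` such that for every bounded open
`Ω ⊆ ℝ^n` with Lipschitz boundary of character `(L, N)` and every real `λ > 0`,
`μ_λ(Ω) ≤ C (vol(Ω) + λ 𝓗^{n-1}(∂Ω))`. -/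
theorem mixedGauge_le_on_lipschitz_domains (n : ℕ) (hn : 2 ≤ n) (L : ℝ≥0) (hL : 0 < L)
    (N : ℕ) :
    ∃ C : ℝ, 0 < C ∧
      ∀ Ω : Set (EuclideanSpace ℝ (Fin n)), IsOpen Ω → Bornology.IsBounded Ω →
        HasLipschitzBoundaryChar n L N Ω →
        ∀ lam : ℝ, 0 < lam →
          mixedGauge n (ENNReal.ofReal lam) Ω ≤
            ENNReal.ofReal C *
              (volume Ω + ENNReal.ofReal lam * μH[(n - 1 : ℕ)] (frontier Ω)) :=
  mixedGauge_le_on_lipschitz_domains_general n hn L N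
end

section
/- Lower comparability on Lipschitz domains (Theorem 4.2): let n ≥ 2, L > 0, and N ∈ ℕ. There exists a constant c > 0, depending only on n, L and N, such that for every bounded open set Ω ⊆ ℝ^n with Lipschitz boundary of character (L, N) and every real λ > 0, μ_λ(Ω) ≥ c · ( vol(Ω) + λ · 𝓗^{n-1}(∂Ω) ), where vol is Lebesgue measure, ∂Ω = frontier Ω, and 𝓗^{n-1} is the (n−1)-dimensional Hausdorff measure. -/
open MeasureTheory
open scoped ENNReal NNReal

open Metric Set Module Filter Topology

/-! A covering set `U` of diameter `r` has `vol U ≲ r ^ n`, and its projection to the base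
`ℝ^(n-1)` of any chart has `𝓗^(n-1)`-measure `≲ r ^ (n-1)`. Since Lebesgue measure and the
pulled-back Hausdorff measures are countably subadditive, `μ_λ(Ω)` dominates
`vol Ω + λ ∑ⱼ 𝓗^(n-1)(πⱼ Ω)` up to a constant. Inside a chart every boundary point of `Ω` lies on
the graph of `fⱼ` over a point of `πⱼ Ω` (the points just below it belong to `Ω`), and the graph
map is Lipschitz, so `𝓗^(n-1)(∂Ω) ≲ ∑ⱼ 𝓗^(n-1)(πⱼ Ω)`. -/

theorem MeasureTheory.Measure.addHaar_le_mul_ediam_pow {E : Type*} [NormedAddCommGroup E]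
    [NormedSpace ℝ E] [MeasurableSpace E] [BorelSpace E] [FiniteDimensional ℝ E]
    (μ : Measure E) [μ.IsAddHaarMeasure] (s : Set E) :
    μ s ≤ μ (closedBall 0 1) * ediam s ^ finrank ℝ E := by
  rcases s.eq_empty_or_nonempty with rfl | ⟨x, hx⟩
  · simp
  by_cases hs : Bornology.IsBounded s
  · calc μ s ≤ μ (closedBall x (diam s)) :=
          measure_mono fun y hy => dist_le_diam_of_mem hs hy hx
      _ = μ (closedBall 0 1) * ediam s ^ finrank ℝ E := by
          rw [addHaar_closedBall' μ x diam_nonneg, mul_comm, ENNReal.ofReal_pow diam_nonneg, diam,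
            ENNReal.ofReal_toReal hs.ediam_ne_top]
  · have : Nontrivial E :=
      not_subsingleton_iff_nontrivial.1 fun _ => hs (Set.toFinite s).isBounded
    rw [isBounded_iff_ediam_ne_top, not_not] at hs
    rw [hs, ENNReal.top_pow finrank_pos.ne',
      ENNReal.mul_top (measure_closedBall_pos μ 0 one_pos).ne']
    exact le_top

theorem ENNReal.exists_pos_ofReal_mul_le_one {A : ℝ≥0∞} (hA : A ≠ ∞) :
    ∃ c : ℝ, 0 < c ∧ ENNReal.ofReal c * A ≤ 1 := by
  refine ⟨(A.toReal + 1)⁻¹, by positivity, ?_⟩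
  calc ENNReal.ofReal (A.toReal + 1)⁻¹ * A = ENNReal.ofReal ((A.toReal + 1)⁻¹ * A.toReal) := by
        rw [ENNReal.ofReal_mul (by positivity), ENNReal.ofReal_toReal hA]
    _ ≤ 1 := ENNReal.ofReal_le_one.2 (by rw [inv_mul_le_iff₀ (by positivity)]; linarith)

theorem addHaar_add_mul_sum_image_le_mul_boundedBy {E F ι : Type*} [NormedAddCommGroup E]
    [NormedSpace ℝ E] [MeasurableSpace E] [BorelSpace E] [FiniteDimensional ℝ E]
    [NormedAddCommGroup F] [NormedSpace ℝ F] [MeasurableSpace F] [BorelSpace F]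
    [FiniteDimensional ℝ F] [Fintype ι]
    (μ : Measure E) [μ.IsAddHaarMeasure] (ν : Measure F) [ν.IsAddHaarMeasure]
    {T : ι → E → F} (hT : ∀ j, LipschitzWith 1 (T j)) (lam : ℝ≥0∞) (s : Set E) :
    μ s + lam * ∑ j, ν (T j '' s) ≤
      (μ (closedBall 0 1) + Fintype.card ι * ν (closedBall 0 1)) *
        OuterMeasure.boundedBy
          (fun t => ediam t ^ finrank ℝ E + lam * ediam t ^ finrank ℝ F) s := by
  set C := μ (closedBall 0 1) + Fintype.card ι * ν (closedBall 0 1)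
  let ρ : OuterMeasure E :=
    μ.toOuterMeasure + lam • ∑ j, OuterMeasure.comap (T j) ν.toOuterMeasure
  have hρ : ∀ t, ρ t = μ t + lam * ∑ j, ν (T j '' t) := fun t => by
    simp [ρ, OuterMeasure.comap_apply]
  have hC : C ≠ ∞ := ENNReal.add_ne_top.2 ⟨measure_closedBall_lt_top.ne,
    ENNReal.mul_ne_top (ENNReal.natCast_ne_top _) measure_closedBall_lt_top.ne⟩
  have hρC : ρ ≤ C • OuterMeasure.boundedBy
      (fun t => ediam t ^ finrank ℝ E + lam * ediam t ^ finrank ℝ F) := by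
    rw [OuterMeasure.smul_boundedBy hC, OuterMeasure.le_boundedBy]
    intro t
    have hTt : ∀ j, ν (T j '' t) ≤ ν (closedBall 0 1) * ediam t ^ finrank ℝ F := fun j =>
      (ν.addHaar_le_mul_ediam_pow _).trans (by gcongr; simpa using (hT j).ediam_image_le t)
    calc ρ t ≤ μ (closedBall 0 1) * ediam t ^ finrank ℝ E +
          lam * ∑ _j : ι, ν (closedBall 0 1) * ediam t ^ finrank ℝ F := by
          rw [hρ]; gcongr with j
          · exact μ.addHaar_le_mul_ediam_pow t
          · exact hTt j
      _ = μ (closedBall 0 1) * ediam t ^ finrank ℝ E +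
          Fintype.card ι * ν (closedBall 0 1) * (lam * ediam t ^ finrank ℝ F) := by
          simp only [Finset.sum_const, Finset.card_univ, nsmul_eq_mul]; ring
      _ ≤ C * ediam t ^ finrank ℝ E + C * (lam * ediam t ^ finrank ℝ F) := by
          gcongr
          · exact le_self_add
          · exact le_add_self
      _ = (C • fun t => ediam t ^ finrank ℝ E + lam * ediam t ^ finrank ℝ F) t := by
          simp only [Pi.smul_apply, smul_eq_mul]; ring
  simpa only [hρ, smul_apply, smul_eq_mul] using hρC s

theorem frontier_inter_subset_image_graph {X F : Type*} [TopologicalSpace X] [TopologicalSpace F]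
    (p : X ≃ₜ F × ℝ) {f : F → ℝ} (hf : Continuous f) {U V : Set X} (hV : IsOpen V)
    (hUV : U ∩ V = {x | (p x).2 < f (p x).1} ∩ V) :
    frontier U ∩ V ⊆ p.symm '' ((fun y => (y, f y)) '' ((fun x => (p x).1) '' U)) := by
  rintro x ⟨hxU, hxV⟩
  have hx_graph : (p x).2 = f (p x).1 := by
    have : x ∈ frontier {x | (p x).2 < f (p x).1} ∩ V := by
      rw [← frontier_inter_open_inter hV, ← hUV, frontier_inter_open_inter hV]
      exact ⟨hxU, hxV⟩
    exact frontier_lt_subset_eq (by fun_prop) (by fun_prop) this.1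
  let below : ℝ → X := fun δ => p.symm ((p x).1, (p x).2 - δ)
  have h_below : ∀ᶠ δ in 𝓝[>] 0, below δ ∈ U := by
    have hcont : Continuous below := by fun_prop
    have hV_near : ∀ᶠ δ in 𝓝 0, below δ ∈ V :=
      hcont.continuousAt.preimage_mem_nhds (by simpa [below] using hV.mem_nhds hxV)
    filter_upwards [nhdsWithin_le_nhds hV_near, self_mem_nhdsWithin] with δ hδV hδ
    have : below δ ∈ U ∩ V := by
      rw [hUV]
      refine ⟨?_, hδV⟩
      simp only [mem_ofPred_eq, below, Homeomorph.apply_symm_apply]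
      linarith [mem_Ioi.1 hδ]
    exact this.1
  obtain ⟨δ, hδ⟩ := h_below.exists
  refine ⟨_, ⟨(p x).1, ⟨below δ, hδ, by simp [below]⟩, rfl⟩, ?_⟩
  simp [← hx_graph]

theorem LipschitzWith.toLp_graph {F : Type*} [PseudoMetricSpace F] {f : F → ℝ} {L : ℝ≥0}
    (hf : LipschitzWith L f) :
    LipschitzWith ((2 : ℝ≥0) ^ (1 / 2 : ℝ) * max 1 L) fun y => WithLp.toLp 2 (y, f y) := by
  simpa [Function.comp_def] using
    (WithLp.prod_lipschitzWith_toLp 2 F ℝ).comp (LipschitzWith.id.prodMk hf)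

theorem hausdorffMeasure_frontier_inter_le {X F : Type*} [EMetricSpace X] [MeasurableSpace X]
    [BorelSpace X] [MetricSpace F] [MeasurableSpace F] [BorelSpace F]
    (e : X ≃ᵢ WithLp 2 (F × ℝ)) {f : F → ℝ} {L : ℝ≥0} (hf : LipschitzWith L f)
    {U V : Set X} (hV : IsOpen V)
    (hUV : U ∩ V = {x | (WithLp.ofLp (e x)).2 < f (WithLp.ofLp (e x)).1} ∩ V)
    {d : ℝ} (hd : 0 ≤ d) :
    μH[d] (frontier U ∩ V) ≤
      ((2 : ℝ≥0) ^ (1 / 2 : ℝ) * max 1 L : ℝ≥0) ^ d *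
        μH[d] ((fun x => (WithLp.ofLp (e x)).1) '' U) := by
  let p : X ≃ₜ F × ℝ := e.toHomeomorph.trans (WithLp.homeomorphProd 2 F ℝ)
  have hgraph : LipschitzWith ((2 : ℝ≥0) ^ (1 / 2 : ℝ) * max 1 L) fun y => p.symm (y, f y) := by
    have := e.symm.isometry.lipschitz.comp hf.toLp_graph
    rwa [one_mul] at this
  calc μH[d] (frontier U ∩ V)
      ≤ μH[d] ((fun y => p.symm (y, f y)) '' ((fun x => (p x).1) '' U)) :=
        measure_mono ((frontier_inter_subset_image_graph p hf.continuous hV hUV).trans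
          (image_image _ _ _).le)
    _ ≤ _ := hgraph.hausdorffMeasure_image_le hd _

theorem HasLipschitzBoundaryChar.exists_hausdorffMeasure_frontier_le {n : ℕ} {L : ℝ≥0} {N : ℕ}
    {Ω : Set (EuclideanSpace ℝ (Fin n))} (hΩ : HasLipschitzBoundaryChar n L N Ω) :
    ∃ T : Fin N → EuclideanSpace ℝ (Fin n) → EuclideanSpace ℝ (Fin (n - 1)),
      (∀ j, LipschitzWith 1 (T j)) ∧
      μH[(n - 1 : ℕ)] (frontier Ω) ≤
        ((2 : ℝ≥0) ^ (1 / 2 : ℝ) * max 1 L : ℝ≥0) ^ ((n - 1 : ℕ) : ℝ) *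
          ∑ j, μH[(n - 1 : ℕ)] (T j '' Ω) := by
  obtain ⟨e, W, g, f, hW, hcov, hf, hgraph⟩ := hΩ
  let e' : Fin N → EuclideanSpace ℝ (Fin n) ≃ᵢ WithLp 2 (EuclideanSpace ℝ (Fin (n - 1)) × ℝ) :=
    fun j => (g j).trans e.toIsometryEquiv
  have hUV : ∀ j, Ω ∩ W j =
      {x | (WithLp.ofLp (e' j x)).2 < f j (WithLp.ofLp (e' j x)).1} ∩ W j := fun j => by
    simpa [preimage_inter, (g j).injective.preimage_image, e'] using
      congrArg (g j ⁻¹' ·) (hgraph j)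
  refine ⟨fun j x => (WithLp.ofLp (e' j x)).1, fun j => ?_, ?_⟩
  · simpa [Function.comp_def] using LipschitzWith.prod_fst.comp
      ((WithLp.prod_lipschitzWith_ofLp 2 _ ℝ).comp (e' j).isometry.lipschitz)
  calc μH[(n - 1 : ℕ)] (frontier Ω) ≤ ∑ j, μH[(n - 1 : ℕ)] (frontier Ω ∩ W j) := by
        refine (measure_mono ?_).trans (measure_iUnion_fintype_le _ _)
        rw [← inter_iUnion]
        exact subset_inter subset_rfl hcov
    _ ≤ _ := Finset.sum_le_sum fun j _ =>
        hausdorffMeasure_frontier_inter_le (e' j) (hf j) (hW j) (hUV j) (by positivity)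
    _ = _ := (Finset.mul_sum _ _ _).symm

theorem volume_add_mul_sum_hausdorffMeasure_image_le_mul_mixedGauge {n N : ℕ}
    {T : Fin N → EuclideanSpace ℝ (Fin n) → EuclideanSpace ℝ (Fin (n - 1))}
    (hT : ∀ j, LipschitzWith 1 (T j)) (lam : ℝ≥0∞) (s : Set (EuclideanSpace ℝ (Fin n))) :
    volume s + lam * ∑ j, μH[(n - 1 : ℕ)] (T j '' s) ≤
      (volume (closedBall (0 : EuclideanSpace ℝ (Fin n)) 1) +
        N * μH[(n - 1 : ℕ)] (closedBall (0 : EuclideanSpace ℝ (Fin (n - 1))) 1)) *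
        mixedGauge n lam s := by
  have := addHaar_add_mul_sum_image_le_mul_boundedBy volume μH[(n - 1 : ℕ)] hT lam s
  rwa [finrank_euclideanSpace_fin, finrank_euclideanSpace_fin, Fintype.card_fin] at this

theorem mixedGauge_ge_on_lipschitz_domains_general (n : ℕ) (L : ℝ≥0)
    (N : ℕ) :
    ∃ c : ℝ, 0 < c ∧
      ∀ Ω : Set (EuclideanSpace ℝ (Fin n)), IsOpen Ω → Bornology.IsBounded Ω →
        HasLipschitzBoundaryChar n L N Ω →
        ∀ lam : ℝ, 0 < lam →
          ENNReal.ofReal c *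
              (volume Ω + ENNReal.ofReal lam * μH[(n - 1 : ℕ)] (frontier Ω)) ≤
            mixedGauge n (ENNReal.ofReal lam) Ω := by
  set K : ℝ≥0∞ := ((2 : ℝ≥0) ^ (1 / 2 : ℝ) * max 1 L : ℝ≥0) ^ ((n - 1 : ℕ) : ℝ)
  set C : ℝ≥0∞ := volume (closedBall (0 : EuclideanSpace ℝ (Fin n)) 1) +
    N * μH[(n - 1 : ℕ)] (closedBall (0 : EuclideanSpace ℝ (Fin (n - 1))) 1)
  have hKC : (1 + K) * C ≠ ∞ := ENNReal.mul_ne_top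
    (ENNReal.add_ne_top.2 ⟨ENNReal.one_ne_top,
      ENNReal.rpow_ne_top_of_nonneg (Nat.cast_nonneg _) ENNReal.coe_ne_top⟩)
    (ENNReal.add_ne_top.2 ⟨measure_closedBall_lt_top.ne,
      ENNReal.mul_ne_top (ENNReal.natCast_ne_top _) measure_closedBall_lt_top.ne⟩)
  obtain ⟨c, hc, hcKC⟩ := ENNReal.exists_pos_ofReal_mul_le_one hKC
  refine ⟨c, hc, fun Ω _ _ hΩ lam _ => ?_⟩
  obtain ⟨T, hT, hfrontier⟩ := hΩ.exists_hausdorffMeasure_frontier_le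
  set lam' := ENNReal.ofReal lam
  set S := ∑ j, μH[(n - 1 : ℕ)] (T j '' Ω)
  calc ENNReal.ofReal c * (volume Ω + lam' * μH[(n - 1 : ℕ)] (frontier Ω))
      ≤ ENNReal.ofReal c * ((1 + K) * (volume Ω + lam' * S)) := by
        gcongr
        calc volume Ω + lam' * μH[(n - 1 : ℕ)] (frontier Ω) ≤ volume Ω + lam' * (K * S) := by
              gcongr
          _ ≤ volume Ω + lam' * (K * S) + (K * volume Ω + lam' * S) := le_self_add
          _ = (1 + K) * (volume Ω + lam' * S) := by ring
    _ ≤ ENNReal.ofReal c * ((1 + K) * (C * mixedGauge n lam' Ω)) := by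
        gcongr
        exact volume_add_mul_sum_hausdorffMeasure_image_le_mul_mixedGauge hT _ _
    _ = ENNReal.ofReal c * ((1 + K) * C) * mixedGauge n lam' Ω := by ring
    _ ≤ mixedGauge n lam' Ω := mul_le_of_le_one_left' hcKC

/-- **Lower comparability on Lipschitz domains.** For `n ≥ 2`, `L > 0`,
`N ∈ ℕ` there is `c > 0` depending only on `n, L, N` such that for every bounded open
`Ω ⊆ ℝ^n` with Lipschitz boundary of character `(L, N)` and every real `λ > 0`,
`μ_λ(Ω) ≥ c (vol(Ω) + λ 𝓗^{n-1}(∂Ω))`. -/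
theorem mixedGauge_ge_on_lipschitz_domains (n : ℕ) (hn : 2 ≤ n) (L : ℝ≥0) (hL : 0 < L)
    (N : ℕ) :
    ∃ c : ℝ, 0 < c ∧
      ∀ Ω : Set (EuclideanSpace ℝ (Fin n)), IsOpen Ω → Bornology.IsBounded Ω →
        HasLipschitzBoundaryChar n L N Ω →
        ∀ lam : ℝ, 0 < lam →
          ENNReal.ofReal c *
              (volume Ω + ENNReal.ofReal lam * μH[(n - 1 : ℕ)] (frontier Ω)) ≤
            mixedGauge n (ENNReal.ofReal lam) Ω :=
  mixedGauge_ge_on_lipschitz_domains_general n L N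
end

section
/- Rectangles in ℝ² (instance of Section 5.2, polygons): there exist absolute constants c, C > 0 such that for all real numbers a, b > 0 and every real λ > 0, the open rectangle R = (0, a) × (0, b) ⊆ ℝ² satisfies c · ( a·b + λ·(a + b) ) ≤ μ_λ(R) ≤ C · ( a·b + λ·(a + b) ), i.e. μ_λ(R) is comparable to area plus λ times perimeter. -/
/-!
Lower bound: a set of diameter `d` has area at most `d²` and each of its two coordinate shadows
has length at most `d`, so the outer measure "area plus `λ` times the lengths of the two
shadows" is at most `2 h_λ(d)` on every set, hence at most `2 μ_λ`; on `R` it equals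
`ab + λ(a + b)`. Upper bound: with `s = min a b`, `R` is covered by `⌈a/s⌉ ⌈b/s⌉ ≤ 4ab/s²`
closed squares of side `s`, each of diameter at most `2s`, and `ab/s ≤ a + b`.
-/

open MeasureTheory
open scoped ENNReal

/-- The mixed-gauge (method I) outer measure `μ_λ` on `ℝ²`, built from the gauge
`h_λ(r) = r² + λ·r` applied to the extended diameter of covering sets. -/
noncomputable def mixedGauge2 (lam : ℝ≥0∞) :
    OuterMeasure (EuclideanSpace ℝ (Fin 2)) :=
  OuterMeasure.boundedBy fun s => (EMetric.diam s) ^ 2 + lam * EMetric.diam s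

open Set Metric

namespace EuclideanSpace

variable {ι : Type*} [Fintype ι]

lemma ediam_image_apply_le (s : Set (EuclideanSpace ℝ ι)) (i : ι) :
    ediam ((fun x => x i) '' s) ≤ ediam s := by
  simpa using
    ((LipschitzWith.eval i).comp (PiLp.lipschitzWith_ofLp 2 fun _ : ι => ℝ)).ediam_image_le s

lemma measurePreserving_toLp : MeasurePreserving (MeasurableEquiv.toLp 2 (ι → ℝ)) :=
  (volume_preserving_symm_measurableEquiv_toLp ι).symm

lemma volume_le_ediam_pow (s : Set (EuclideanSpace ℝ ι)) :
    volume s ≤ ediam s ^ Fintype.card ι :=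
  calc volume s = volume (WithLp.toLp 2 ⁻¹' s) :=
        (measurePreserving_toLp.measure_preimage_equiv s).symm
  _ ≤ ediam (WithLp.toLp 2 ⁻¹' s) ^ Fintype.card ι := Real.volume_pi_le_diam_pow _
  _ ≤ ediam s ^ Fintype.card ι := by
        gcongr
        simpa using (PiLp.antilipschitzWith_toLp 2 fun _ : ι => ℝ).ediam_preimage_le s

lemma volume_setOf_forall_mem (A : ι → Set ℝ) :
    volume {x : EuclideanSpace ℝ ι | ∀ i, x i ∈ A i} = ∏ i, volume (A i) := by
  rw [← volume_pi_pi, ← measurePreserving_toLp.measure_preimage_equiv]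
  congr 1
  ext
  simp [MeasurableEquiv.coe_toLp]

lemma edist_le_sum_edist (x y : EuclideanSpace ℝ ι) :
    edist x y ≤ ∑ i, edist (x i) (y i) := by
  have hdist : dist x y ≤ ∑ i, dist (x i) (y i) := by
    rw [EuclideanSpace.dist_eq]
    exact Real.sqrt_le_iff.2 ⟨by positivity,
      Finset.sum_sq_le_sq_sum_of_nonneg fun i _ => dist_nonneg⟩
  simpa only [edist_dist, ← ENNReal.ofReal_sum_of_nonneg fun i _ => dist_nonneg]
    using ENNReal.ofReal_le_ofReal hdist

end EuclideanSpace

def rect (A B : Set ℝ) : Set (EuclideanSpace ℝ (Fin 2)) := {x | x 0 ∈ A ∧ x 1 ∈ B}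

lemma volume_rect (A B : Set ℝ) : volume (rect A B) = volume A * volume B := by
  simpa [rect, Fin.forall_fin_two] using EuclideanSpace.volume_setOf_forall_mem ![A, B]

lemma image_apply_zero_rect {A B : Set ℝ} (hB : B.Nonempty) : (fun x => x 0) '' rect A B = A := by
  refine Subset.antisymm (image_subset_iff.2 fun x hx => hx.1) fun t ht => ?_
  obtain ⟨u, hu⟩ := hB
  exact ⟨!₂[t, u], ⟨ht, hu⟩, rfl⟩

lemma image_apply_one_rect {A B : Set ℝ} (hA : A.Nonempty) : (fun x => x 1) '' rect A B = B := by
  refine Subset.antisymm (image_subset_iff.2 fun x hx => hx.2) fun t ht => ?_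
  obtain ⟨u, hu⟩ := hA
  exact ⟨!₂[u, t], ⟨hu, ht⟩, rfl⟩

lemma ediam_rect_le {A B : Set ℝ} : ediam (rect A B) ≤ ediam A + ediam B := by
  refine ediam_le fun x hx y hy => ?_
  calc edist x y ≤ edist (x 0) (y 0) + edist (x 1) (y 1) := by
        simpa using EuclideanSpace.edist_le_sum_edist x y
  _ ≤ ediam A + ediam B :=
        add_le_add (edist_le_ediam_of_mem hx.1 hy.1) (edist_le_ediam_of_mem hx.2 hy.2)

noncomputable def areaShadow (lam : ℝ≥0∞) : OuterMeasure (EuclideanSpace ℝ (Fin 2)) :=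
  volume.toOuterMeasure +
    lam • (volume.toOuterMeasure.comap (fun x => x 0) + volume.toOuterMeasure.comap (fun x => x 1))

lemma areaShadow_apply (lam : ℝ≥0∞) (s : Set (EuclideanSpace ℝ (Fin 2))) :
    areaShadow lam s =
      volume s + lam * (volume ((fun x => x 0) '' s) + volume ((fun x => x 1) '' s)) := by
  simp [areaShadow, OuterMeasure.comap_apply, mul_add]

lemma areaShadow_le_two_mul (lam : ℝ≥0∞) (s : Set (EuclideanSpace ℝ (Fin 2))) :
    areaShadow lam s ≤ 2 * (ediam s ^ 2 + lam * ediam s) := by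
  have h0 := (Real.volume_le_diam _).trans (EuclideanSpace.ediam_image_apply_le s 0)
  have h1 := (Real.volume_le_diam _).trans (EuclideanSpace.ediam_image_apply_le s 1)
  calc areaShadow lam s ≤ ediam s ^ 2 + lam * (ediam s + ediam s) := by
        rw [areaShadow_apply]
        gcongr
        simpa using EuclideanSpace.volume_le_ediam_pow s
  _ ≤ 2 * (ediam s ^ 2 + lam * ediam s) := by
        rw [two_mul, mul_add, ← add_assoc]
        gcongr
        exact le_add_self

lemma inv_two_smul_areaShadow_le_mixedGauge2 (lam : ℝ≥0∞) :
    (2⁻¹ : ℝ≥0∞) • areaShadow lam ≤ mixedGauge2 lam :=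
  OuterMeasure.le_boundedBy.2 fun s =>
    (ENNReal.inv_mul_le_iff two_ne_zero ENNReal.ofNat_ne_top).2 (areaShadow_le_two_mul lam s)

lemma areaShadow_rect_Ioo {a b lam : ℝ} (ha : 0 < a) (hb : 0 < b) (hlam : 0 ≤ lam) :
    areaShadow (ENNReal.ofReal lam) (rect (Ioo 0 a) (Ioo 0 b)) =
      ENNReal.ofReal (a * b + lam * (a + b)) := by
  rw [areaShadow_apply, image_apply_zero_rect (nonempty_Ioo.2 hb),
    image_apply_one_rect (nonempty_Ioo.2 ha), volume_rect]
  simp only [Real.volume_Ioo, sub_zero]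
  rw [ENNReal.ofReal_add (by positivity) (by positivity), ENNReal.ofReal_mul ha.le,
    ENNReal.ofReal_mul hlam, ENNReal.ofReal_add ha.le hb.le]

lemma two_inv_mul_le_mixedGauge2_rect_Ioo {a b lam : ℝ} (ha : 0 < a) (hb : 0 < b)
    (hlam : 0 ≤ lam) :
    ENNReal.ofReal 2⁻¹ * ENNReal.ofReal (a * b + lam * (a + b)) ≤
      mixedGauge2 (ENNReal.ofReal lam) (rect (Ioo 0 a) (Ioo 0 b)) := by
  rw [← areaShadow_rect_Ioo ha hb hlam, ENNReal.ofReal_inv_of_pos two_pos, ENNReal.ofReal_ofNat]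
  exact inv_two_smul_areaShadow_le_mixedGauge2 _ _

lemma mixedGauge2_le_card_mul {ι : Type*} [Fintype ι] (lam : ℝ≥0∞)
    {s : Set (EuclideanSpace ℝ (Fin 2))} {t : ι → Set (EuclideanSpace ℝ (Fin 2))} {d : ℝ≥0∞}
    (hst : s ⊆ ⋃ i, t i) (ht : ∀ i, ediam (t i) ≤ d) :
    mixedGauge2 lam s ≤ Fintype.card ι * (d ^ 2 + lam * d) :=
  calc mixedGauge2 lam s ≤ ∑' i, mixedGauge2 lam (t i) :=
        (measure_mono hst).trans (measure_iUnion_le t)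
  _ ≤ ∑' _ : ι, (d ^ 2 + lam * d) := ENNReal.tsum_le_tsum fun i =>
        (OuterMeasure.boundedBy_le _).trans (by gcongr <;> exact ht i)
  _ = Fintype.card ι * (d ^ 2 + lam * d) := by
        rw [tsum_fintype, Finset.sum_const, Finset.card_univ, nsmul_eq_mul]

lemma exists_lt_natCeil_div_mem_Icc {a s t : ℝ} (hs : 0 < s) (ht : 0 ≤ t) (hta : t < a) :
    ∃ n < ⌈a / s⌉₊, t ∈ Icc (n * s) ((n + 1) * s) := by
  have hts : 0 ≤ t / s := div_nonneg ht hs.le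
  refine ⟨⌊t / s⌋₊, ?_, (le_div_iff₀ hs).1 (Nat.floor_le hts),
    ((div_lt_iff₀ hs).1 (Nat.lt_floor_add_one _)).le⟩
  exact (Nat.floor_lt hts).2 (((div_lt_div_iff_of_pos_right hs).2 hta).trans_le (Nat.le_ceil _))

lemma rect_Ioo_subset_iUnion_rect_Icc {a b s : ℝ} (hs : 0 < s) :
    rect (Ioo 0 a) (Ioo 0 b) ⊆ ⋃ p : Fin ⌈a / s⌉₊ × Fin ⌈b / s⌉₊,
      rect (Icc (p.1 * s) ((p.1 + 1) * s)) (Icc (p.2 * s) ((p.2 + 1) * s)) := by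
  rintro x ⟨hx0, hx1⟩
  obtain ⟨m, hm, hxm⟩ := exists_lt_natCeil_div_mem_Icc hs hx0.1.le hx0.2
  obtain ⟨n, hn, hxn⟩ := exists_lt_natCeil_div_mem_Icc hs hx1.1.le hx1.2
  exact mem_iUnion.2 ⟨(⟨m, hm⟩, ⟨n, hn⟩), hxm, hxn⟩

lemma ediam_rect_Icc_le {s : ℝ} (hs : 0 ≤ s) (m n : ℕ) :
    ediam (rect (Icc (m * s) ((m + 1) * s)) (Icc (n * s) ((n + 1) * s))) ≤
      ENNReal.ofReal (2 * s) := by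
  refine ediam_rect_le.trans ?_
  rw [Real.ediam_Icc, Real.ediam_Icc, add_one_mul, add_sub_cancel_left, add_one_mul,
    add_sub_cancel_left, two_mul, ENNReal.ofReal_add hs hs]

lemma natCeil_div_mul_le_two_mul {a s : ℝ} (hs : 0 < s) (hsa : s ≤ a) :
    (⌈a / s⌉₊ : ℝ) * s ≤ 2 * a := by
  have := Nat.ceil_lt_add_one (div_nonneg (hs.le.trans hsa) hs.le)
  calc (⌈a / s⌉₊ : ℝ) * s ≤ (a / s + 1) * s := by gcongr
  _ = a + s := by field_simp
  _ ≤ 2 * a := by linarith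

lemma mixedGauge2_rect_Ioo_le {a b lam : ℝ} (ha : 0 < a) (hb : 0 < b) (hlam : 0 ≤ lam) :
    mixedGauge2 (ENNReal.ofReal lam) (rect (Ioo 0 a) (Ioo 0 b)) ≤
      ENNReal.ofReal 16 * ENNReal.ofReal (a * b + lam * (a + b)) := by
  set s := min a b
  have hs : 0 < s := lt_min ha hb
  set N : ℕ := ⌈a / s⌉₊
  set M : ℕ := ⌈b / s⌉₊
  have hN : (N : ℝ) * s ≤ 2 * a := natCeil_div_mul_le_two_mul hs (min_le_left a b)
  have hM : (M : ℝ) * s ≤ 2 * b := natCeil_div_mul_le_two_mul hs (min_le_right a b)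
  have hab : a * b ≤ (a + b) * s := by
    rcases le_total a b with h | h
    · simp only [s, min_eq_left h]; nlinarith
    · simp only [s, min_eq_right h]; nlinarith
  have hcount : (N : ℝ) * M * ((2 * s) ^ 2 + lam * (2 * s)) ≤ 16 * (a * b + lam * (a + b)) := by
    have harea : N * s * (M * s) ≤ 2 * a * (2 * b) :=
      mul_le_mul hN hM (by positivity) (by positivity)
    have hperim : N * M * s ≤ 4 * (a + b) := le_of_mul_le_mul_right (by nlinarith) hs
    nlinarith [mul_le_mul_of_nonneg_left hperim (by positivity : 0 ≤ 2 * lam)]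
  calc mixedGauge2 (ENNReal.ofReal lam) (rect (Ioo 0 a) (Ioo 0 b))
      ≤ Fintype.card (Fin N × Fin M) *
          (ENNReal.ofReal (2 * s) ^ 2 + ENNReal.ofReal lam * ENNReal.ofReal (2 * s)) :=
        mixedGauge2_le_card_mul _ (rect_Ioo_subset_iUnion_rect_Icc hs)
          fun p => ediam_rect_Icc_le hs.le p.1 p.2
  _ = ENNReal.ofReal (N * M * ((2 * s) ^ 2 + lam * (2 * s))) := by
        rw [Fintype.card_prod, Fintype.card_fin, Fintype.card_fin,
          ← ENNReal.ofReal_pow (by positivity), ← ENNReal.ofReal_mul hlam,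
          ← ENNReal.ofReal_add (by positivity) (by positivity), ENNReal.ofReal_mul (by positivity),
          ENNReal.ofReal_mul (by positivity)]
        simp
  _ ≤ ENNReal.ofReal (16 * (a * b + lam * (a + b))) := ENNReal.ofReal_le_ofReal hcount
  _ = ENNReal.ofReal 16 * ENNReal.ofReal (a * b + lam * (a + b)) := ENNReal.ofReal_mul (by norm_num)

/-- **Rectangles in `ℝ²`.** There are absolute constants `c, C > 0` such
that for all reals `a, b > 0` and every real `λ > 0`, the open rectangle
`R = (0,a) × (0,b) ⊆ ℝ²` satisfies
`c (a·b + λ(a+b)) ≤ μ_λ(R) ≤ C (a·b + λ(a+b))`. -/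
theorem mixedGauge2_rectangle :
    ∃ c C : ℝ, 0 < c ∧ 0 < C ∧
      ∀ a b : ℝ, 0 < a → 0 < b → ∀ lam : ℝ, 0 < lam →
        ENNReal.ofReal c * ENNReal.ofReal (a * b + lam * (a + b)) ≤
            mixedGauge2 (ENNReal.ofReal lam)
              {x : EuclideanSpace ℝ (Fin 2) | x 0 ∈ Set.Ioo 0 a ∧ x 1 ∈ Set.Ioo 0 b} ∧
          mixedGauge2 (ENNReal.ofReal lam)
              {x : EuclideanSpace ℝ (Fin 2) | x 0 ∈ Set.Ioo 0 a ∧ x 1 ∈ Set.Ioo 0 b} ≤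
            ENNReal.ofReal C * ENNReal.ofReal (a * b + lam * (a + b)) :=
  ⟨2⁻¹, 16, by norm_num, by norm_num, fun _ _ ha hb _ hlam =>
    ⟨two_inv_mul_le_mixedGauge2_rect_Ioo ha hb hlam.le, mixedGauge2_rect_Ioo_le ha hb hlam.le⟩⟩
end
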